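/- Let δ = 1 - log₂ e + log₂ log₂ e. For every integer n ≥ 1, n·⌈log₂ n⌉ - 2^⌈log₂ n⌉ + 1 < n·log₂ n - (1 - δ)·n + 1; in particular W(n) < n·log₂ n - 0.913·n + 1. -/

import Mathlib

/-!
Write `c = ⌈log₂ n⌉` and `g = c - log₂ n`, so that `2 ^ c = n * 2 ^ g`. The claim becomes
`g + 1 - δ < 2 ^ g`, and `x ↦ x + 1 - δ` is exactly the tangent to the convex function
`x ↦ 2 ^ x` at the point `log₂ log₂ e` where its slope is `1`. Strictness can only fail at that
point, i.e. when `n = 2 ^ c * ln 2`, which is impossible because `ln 2` is irrational (Hermite: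
`e ^ a` is not an integer for a nonzero integer `a`).
-/

noncomputable def delta : ℝ :=
  1 - Real.logb 2 (Real.exp 1) + Real.logb 2 (Real.logb 2 (Real.exp 1))

open Real Polynomial

namespace Real

/-- Hermite's argument: the integers `k * e ^ a - p * g(a)` supplied by the analytic part of
Lindemann–Weierstrass are nonzero, since `p ∤ k * e ^ a`, yet tend to `0`. -/
theorem exp_intCast_ne_intCast {a : ℤ} (ha : a ≠ 0) (m : ℤ) : exp a ≠ m := by
  intro hm
  have hm0 : m ≠ 0 := by
    rintro rfl
    simp [(exp_pos a).ne'] at hm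
  obtain ⟨c, hc⟩ := LindemannWeierstrass.exp_polynomial_approx (X - C a) (by simpa using ha)
  obtain ⟨N, hN⟩ := Filter.eventually_atTop.1
    (((FloorSemiring.tendsto_pow_div_factorial_atTop c).const_mul c).eventually_lt_const
      (by norm_num : (c * 0 : ℝ) < 1))
  obtain ⟨p, hp_ge, hp⟩ := Nat.exists_infinite_primes (N + a.natAbs + m.natAbs + 1)
  obtain ⟨k, hk, g, -, hg⟩ := hc p (by simp; omega) hp
  have hpm : ¬ (p : ℤ) ∣ k * m := by
    refine fun h => (Int.Prime.dvd_mul' hp h).elim hk fun h => ?_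
    have := Int.natAbs_le_of_dvd_ne_zero h hm0
    simp at this; omega
  have hne : k * m - p * g.eval a ≠ 0 := fun h =>
    hpm ⟨g.eval a, by linarith⟩
  have hcast : k • Complex.exp a - p • aeval (a : ℂ) g = ((k * m - p * g.eval a : ℤ) : ℂ) := by
    have : Complex.exp a = m := by
      rw [← Complex.ofReal_intCast, ← Complex.ofReal_exp, hm, Complex.ofReal_intCast]
    simp [this, aeval_def, eval₂_at_intCast]
  have hbound := hg (r := (a : ℂ)) (by rw [aroots_X_sub_C]; simp)
  rw [hcast, Complex.norm_intCast] at hbound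
  have hsmall := hN (p - 1) (by omega)
  rw [mul_div_assoc', ← pow_succ', Nat.sub_add_cancel hp.one_le] at hsmall
  have : (1 : ℝ) ≤ |((k * m - p * g.eval a : ℤ) : ℝ)| := by
    exact_mod_cast Int.one_le_abs hne
  linarith

theorem irrational_log_natCast {m : ℕ} (hm : 1 < m) : Irrational (log m) := by
  rintro ⟨q, hq⟩
  have hq0 : q.num ≠ 0 := by
    rw [Rat.num_ne_zero]
    rintro rfl
    exact (log_pos (Nat.one_lt_cast.2 hm)).ne (by simpa using hq)
  refine exp_intCast_ne_intCast hq0 (m ^ q.den) ?_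
  have hnum : (q.num : ℝ) = q.den * q := by exact_mod_cast (Rat.den_mul_eq_num q).symm
  rw [hnum, hq, exp_nat_mul, exp_log (by positivity)]
  push_cast; rfl

theorem rpow_mul_one_add_log_mul_sub_lt_rpow {b x y : ℝ} (hb : 0 < b) (hb1 : b ≠ 1)
    (hxy : x ≠ y) : b ^ y * (1 + log b * (x - y)) < b ^ x := by
  have hlog : log b * (x - y) ≠ 0 :=
    mul_ne_zero (log_ne_zero_of_pos_of_ne_one hb hb1) (sub_ne_zero.2 hxy)
  calc b ^ y * (1 + log b * (x - y)) < b ^ y * exp (log b * (x - y)) := by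
        gcongr; linarith [add_one_lt_exp hlog]
    _ = b ^ x := by
        rw [rpow_def_of_pos hb, rpow_def_of_pos hb, ← exp_add]; ring_nf

theorem logb_two_exp_one : logb 2 (exp 1) = (log 2)⁻¹ := by
  rw [logb, log_exp, one_div]

end Real

theorem add_one_sub_delta_lt_two_rpow {x : ℝ} (hx : x ≠ logb 2 (logb 2 (exp 1))) :
    x + (1 - delta) < 2 ^ x := by
  have h2y : (2 : ℝ) ^ logb 2 (logb 2 (exp 1)) = (log 2)⁻¹ := by
    rw [rpow_logb two_pos (by norm_num) (by rw [logb_two_exp_one]; positivity), logb_two_exp_one]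
  calc x + (1 - delta)
      = 2 ^ logb 2 (logb 2 (exp 1)) * (1 + log 2 * (x - logb 2 (logb 2 (exp 1)))) := by
        rw [h2y, delta, logb_two_exp_one]
        field_simp [(log_pos one_lt_two).ne']
        ring
    _ < 2 ^ x := rpow_mul_one_add_log_mul_sub_lt_rpow two_pos (by norm_num) hx

theorem delta_lt : delta < 0.087 := by
  have hL := log_two_gt_d9
  have hL' := log_two_lt_d9
  have hL0 : 0 < log 2 := by linarith
  have hexp : (log 2)⁻¹ < exp 0.3671 := calc
    (log 2)⁻¹ < 1.4434 := by rw [inv_lt_comm₀ hL0 (by norm_num)]; linarith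
    _ ≤ ∑ i ∈ Finset.range 5, (0.3671 : ℝ) ^ i / i.factorial := by
      norm_num [Finset.sum_range_succ, Nat.factorial]
    _ ≤ exp 0.3671 := sum_le_exp_of_nonneg (by norm_num) 5
  have hlog : log (log 2)⁻¹ < 0.3671 := (log_lt_iff_lt_exp (by positivity)).2 hexp
  have hdelta : delta = 1 - (1 - log (log 2)⁻¹) / log 2 := by
    rw [delta, logb_two_exp_one, logb]; ring
  rw [hdelta, sub_lt_comm, lt_div_iff₀ hL0]
  nlinarith

theorem W_upper_bound (n : ℕ) (hn : 1 ≤ n) :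
    ((n : ℝ) * Nat.clog 2 n - 2 ^ Nat.clog 2 n + 1
        < (n : ℝ) * Real.logb 2 n - (1 - delta) * n + 1) ∧
    ((n : ℝ) * Nat.clog 2 n - 2 ^ Nat.clog 2 n + 1
        < (n : ℝ) * Real.logb 2 n - 0.913 * n + 1) := by
  set c := Nat.clog 2 n
  have hn0 : (0 : ℝ) < n := by exact_mod_cast hn
  have h2c : (2 : ℝ) ^ c = n * 2 ^ ((c : ℝ) - logb 2 n) := by
    rw [rpow_sub two_pos, rpow_logb two_pos (by norm_num) hn0, rpow_natCast]
    field_simp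
  have hgap : (c : ℝ) - logb 2 n ≠ logb 2 (logb 2 (exp 1)) := by
    intro h
    refine (irrational_log_natCast one_lt_two).ne_rat (n / 2 ^ c) ?_
    rw [h, logb_two_exp_one, rpow_logb two_pos (by norm_num) (by positivity)] at h2c
    rw [Nat.cast_ofNat, Rat.cast_div, Rat.cast_natCast, Rat.cast_pow, Rat.cast_ofNat, h2c]
    field_simp
  have htangent : (n : ℝ) * ((c - logb 2 n) + (1 - delta)) < 2 ^ c :=
    h2c ▸ mul_lt_mul_of_pos_left (add_one_sub_delta_lt_two_rpow hgap) hn0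
  have hdelta := delta_lt
  constructor <;> nlinarith
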